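/- arXiv:1002.3963 — 4 statements merged into one kernel-verified Lean document; each statement's English description precedes it below -/
import Mathlib

section
/- More generally, for even n = 2k the quadratic form I₀(v) = 2 Σ_{i=0}^{k−1} (−1)^i (2k choose i) v^{i+1}v^{2k+1−i} + (2k choose k)(−1)^k (v^{k+1})² on ℝ^{2k+1} is nondegenerate of signature (k+1,k) or (k,k+1). -/
/-- The quadratic invariant I₀ on ℝ^{2k+1} obtained from the 2k-th transvectant of a
binary 2k-form with itself. -/
noncomputable def I0 (k : ℕ) (v : Fin (2 * k + 1) → ℝ) : ℝ :=
  2 * ∑ i : Fin k,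
      (-1 : ℝ) ^ (i : ℕ) * (((2 * k).choose (i : ℕ) : ℕ) : ℝ) *
        v ⟨(i : ℕ), by omega⟩ * v ⟨2 * k - (i : ℕ), by omega⟩ +
    (((2 * k).choose k : ℕ) : ℝ) * (-1 : ℝ) ^ k * v ⟨k, by omega⟩ ^ 2

noncomputable section

namespace I0Proof

def t (k : ℕ) : ℕ := if Even k then k + 1 else k
def m (k : ℕ) : ℕ := if Even k then k else 2 * k

lemma tm (k : ℕ) : (t k = k + 1 ∧ m k = k) ∨ (t k = k ∧ m k = 2 * k) := by
  unfold t m; split <;> simp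

def c (k i : ℕ) : ℝ := (Real.sqrt (2 * (2 * k).choose i))⁻¹
def d (k : ℕ) : ℝ := (Real.sqrt ((2 * k).choose k))⁻¹

lemma choose_pos (k i : ℕ) (h : i ≤ 2 * k) : (0:ℝ) < (((2 * k).choose i : ℕ) : ℝ) := by
  exact_mod_cast Nat.choose_pos h

lemma c_pos (k i : ℕ) (h : i ≤ 2 * k) : 0 < c k i := by
  have h1 := choose_pos k i h
  have h2 : (0:ℝ) < 2 * (((2 * k).choose i : ℕ) : ℝ) := by linarith
  rw [c, inv_pos]
  exact Real.sqrt_pos.mpr h2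

lemma c_ne (k i : ℕ) (h : i ≤ 2 * k) : c k i ≠ 0 := (c_pos k i h).ne'

lemma c_sq (k i : ℕ) (h : i ≤ 2 * k) :
    2 * (((2 * k).choose i : ℕ) : ℝ) * c k i ^ 2 = 1 := by
  have h1 := choose_pos k i h
  have h2 : (0:ℝ) ≤ 2 * (((2 * k).choose i : ℕ) : ℝ) := by linarith
  rw [c, inv_pow, Real.sq_sqrt h2]
  field_simp

lemma d_pos (k : ℕ) : 0 < d k := by
  have h1 := choose_pos k k (by omega)
  rw [d, inv_pos]
  exact Real.sqrt_pos.mpr h1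

lemma d_sq (k : ℕ) : (((2 * k).choose k : ℕ) : ℝ) * d k ^ 2 = 1 := by
  have h1 := choose_pos k k (by omega)
  rw [d, inv_pow, Real.sq_sqrt h1.le]
  field_simp

def Lf (k : ℕ) (v : Fin (2 * k + 1) → ℝ) (j : Fin (2 * k + 1)) : ℝ :=
  if h : (j : ℕ) < k then
    c k j * (v ⟨j, by omega⟩ + v ⟨t k + j, by have := tm k; omega⟩)
  else if h2 : (j : ℕ) = k then
    d k * v ⟨m k, by have := tm k; omega⟩
  else
    (-1 : ℝ) ^ (2 * k - (j : ℕ)) * c k (2 * k - (j : ℕ)) *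
      (v ⟨2 * k - (j : ℕ), by omega⟩ -
       v ⟨t k + (2 * k - (j : ℕ)), by have := tm k; have := j.isLt; omega⟩)

def Mf (k : ℕ) (u : Fin (2 * k + 1) → ℝ) (j : Fin (2 * k + 1)) : ℝ :=
  if h : (j : ℕ) < k then
    (u ⟨j, by omega⟩ + (-1 : ℝ) ^ (j : ℕ) * u ⟨2 * k - (j : ℕ), by omega⟩) / (2 * c k j)
  else if h2 : (j : ℕ) = m k then
    u ⟨k, by omega⟩ / d k
  else
    (u ⟨(j : ℕ) - t k, by have := tm k; have := j.isLt; omega⟩ -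
      (-1 : ℝ) ^ ((j : ℕ) - t k) *
        u ⟨2 * k - ((j : ℕ) - t k), by omega⟩) / (2 * c k ((j : ℕ) - t k))

lemma left_inv (k : ℕ) (v : Fin (2 * k + 1) → ℝ) : Mf k (Lf k v) = v := by
  funext j
  have hj := j.isLt
  have htm := tm k
  by_cases h : (j : ℕ) < k
  · rw [Mf, dif_pos h]
    rw [show (Lf k v) ⟨(j : ℕ), by omega⟩ = c k j * (v ⟨j, by omega⟩ + v ⟨t k + j, by omega⟩) by
      rw [Lf, dif_pos h]]
    rw [show (Lf k v) ⟨2 * k - (j : ℕ), by omega⟩ =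
        (-1 : ℝ) ^ (2 * k - (2 * k - (j:ℕ))) * c k (2 * k - (2 * k - (j:ℕ))) *
          (v ⟨2 * k - (2 * k - (j:ℕ)), by omega⟩ -
           v ⟨t k + (2 * k - (2 * k - (j:ℕ))), by omega⟩) by
      rw [Lf, dif_neg (by simp; omega), dif_neg (by simp; omega)]]
    have e1 : 2 * k - (2 * k - (j:ℕ)) = (j:ℕ) := by omega
    simp only [e1]
    have e3 := c_ne k j (by omega)
    have e4 : (⟨(j:ℕ), by omega⟩ : Fin (2*k+1)) = j := by exact Fin.ext rfl
    rw [e4]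
    rcases Nat.even_or_odd (j:ℕ) with hp | hp <;>
      simp only [hp.neg_one_pow] <;> field_simp <;> ring
  · by_cases h2 : (j : ℕ) = m k
    · rw [Mf, dif_neg (by omega), dif_pos h2]
      rw [show (Lf k v) ⟨k, by omega⟩ = d k * v ⟨m k, by omega⟩ by
        rw [Lf, dif_neg (by simp), dif_pos rfl]]
      have e3 := (d_pos k).ne'
      have e4 : (⟨m k, by omega⟩ : Fin (2*k+1)) = j := by exact Fin.ext h2.symm
      rw [e4]
      field_simp
    · rw [Mf, dif_neg (by omega), dif_neg h2]
      have hik : (j : ℕ) - t k < k := by omega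
      have hjt : t k + ((j:ℕ) - t k) = (j:ℕ) := by omega
      rw [show (Lf k v) ⟨(j : ℕ) - t k, by omega⟩ =
          c k ((j:ℕ) - t k) * (v ⟨(j:ℕ) - t k, by omega⟩ + v ⟨t k + ((j:ℕ) - t k), by omega⟩) by
        rw [Lf, dif_pos hik]]
      rw [show (Lf k v) ⟨2 * k - ((j : ℕ) - t k), by omega⟩ =
          (-1 : ℝ) ^ (2 * k - (2 * k - ((j:ℕ) - t k))) * c k (2 * k - (2 * k - ((j:ℕ) - t k))) *
            (v ⟨2 * k - (2 * k - ((j:ℕ) - t k)), by omega⟩ -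
             v ⟨t k + (2 * k - (2 * k - ((j:ℕ) - t k))), by omega⟩) by
        rw [Lf, dif_neg (by simp; omega), dif_neg (by simp; omega)]]
      have e1 : 2 * k - (2 * k - ((j:ℕ) - t k)) = (j:ℕ) - t k := by omega
      simp only [e1]
      have e3 := c_ne k ((j:ℕ) - t k) (by omega)
      have e4 : (⟨t k + ((j:ℕ) - t k), by omega⟩ : Fin (2*k+1)) = j := Fin.ext hjt
      rw [e4]
      rcases Nat.even_or_odd ((j:ℕ) - t k) with hp | hp <;>
        simp only [hp.neg_one_pow] <;> field_simp <;> ring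

lemma right_inv (k : ℕ) (u : Fin (2 * k + 1) → ℝ) : Lf k (Mf k u) = u := by
  funext j
  have hj := j.isLt
  have htm := tm k
  by_cases h : (j : ℕ) < k
  · rw [Lf, dif_pos h]
    rw [show (Mf k u) ⟨(j : ℕ), by omega⟩ =
        (u ⟨j, by omega⟩ + (-1:ℝ)^(j:ℕ) * u ⟨2*k - (j:ℕ), by omega⟩) / (2 * c k j) by
      rw [Mf, dif_pos h]]
    rw [show (Mf k u) ⟨t k + (j : ℕ), by omega⟩ =
        (u ⟨(t k + (j:ℕ)) - t k, by omega⟩ -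
          (-1:ℝ)^((t k + (j:ℕ)) - t k) * u ⟨2*k - ((t k + (j:ℕ)) - t k), by omega⟩) /
          (2 * c k ((t k + (j:ℕ)) - t k)) by
      rw [Mf, dif_neg (by simp; omega), dif_neg (by simp; omega)]]
    have e1 : (t k + (j:ℕ)) - t k = (j:ℕ) := by omega
    simp only [e1]
    have e3 := c_ne k j (by omega)
    have e4 : (⟨(j:ℕ), by omega⟩ : Fin (2*k+1)) = j := Fin.ext rfl
    rw [e4]
    field_simp
    ring
  · by_cases h2 : (j : ℕ) = k
    · rw [Lf, dif_neg h, dif_pos h2]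
      rw [show (Mf k u) ⟨m k, by omega⟩ = u ⟨k, by omega⟩ / d k by
        rw [Mf, dif_neg (by simp; omega), dif_pos rfl]]
      have e3 := (d_pos k).ne'
      have e4 : (⟨k, by omega⟩ : Fin (2*k+1)) = j := Fin.ext h2.symm
      rw [e4]
      field_simp
    · rw [Lf, dif_neg h, dif_neg h2]
      have hik : 2 * k - (j:ℕ) < k := by omega
      rw [show (Mf k u) ⟨2 * k - (j : ℕ), by omega⟩ =
          (u ⟨2*k - (j:ℕ), by omega⟩ + (-1:ℝ)^(2*k - (j:ℕ)) *
            u ⟨2*k - (2*k - (j:ℕ)), by omega⟩) / (2 * c k (2*k - (j:ℕ))) by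
        rw [Mf, dif_pos hik]]
      rw [show (Mf k u) ⟨t k + (2 * k - (j : ℕ)), by omega⟩ =
          (u ⟨(t k + (2*k - (j:ℕ))) - t k, by omega⟩ -
            (-1:ℝ)^((t k + (2*k - (j:ℕ))) - t k) *
              u ⟨2*k - ((t k + (2*k - (j:ℕ))) - t k), by omega⟩) /
            (2 * c k ((t k + (2*k - (j:ℕ))) - t k)) by
        rw [Mf, dif_neg (by simp; omega), dif_neg (by simp; omega)]]
      have e1 : (t k + (2*k - (j:ℕ))) - t k = 2*k - (j:ℕ) := by omega
      have e0 : 2*k - (2*k - (j:ℕ)) = (j:ℕ) := by omega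
      simp only [e1, e0]
      have e3 := c_ne k (2*k - (j:ℕ)) (by omega)
      have e4 : (⟨(j:ℕ), by omega⟩ : Fin (2*k+1)) = j := Fin.ext rfl
      rw [e4]
      rcases Nat.even_or_odd (2*k - (j:ℕ)) with hp | hp <;>
        simp only [hp.neg_one_pow] <;> field_simp <;> ring

def Leq (k : ℕ) : (Fin (2 * k + 1) → ℝ) ≃ₗ[ℝ] (Fin (2 * k + 1) → ℝ) where
  toFun := Lf k
  invFun := Mf k
  left_inv := left_inv k
  right_inv := right_inv k
  map_add' v w := by
    funext j
    simp only [Lf, Pi.add_apply]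
    split_ifs <;> ring
  map_smul' r v := by
    funext j
    simp only [Lf, Pi.smul_apply, smul_eq_mul, RingHom.id_apply]
    split_ifs <;> ring

def g (k : ℕ) (v : Fin (2 * k + 1) → ℝ) (n : ℕ) : ℝ :=
  if h : n < 2 * k + 1 then v ⟨n, h⟩ ^ 2 else 0

lemma g_spec (k : ℕ) (v : Fin (2 * k + 1) → ℝ) (n : ℕ) (h : n < 2 * k + 1) :
    g k v n = v ⟨n, h⟩ ^ 2 := dif_pos h

lemma key (k : ℕ) (v : Fin (2 * k + 1) → ℝ) :
    I0 k (Lf k v) =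
      ∑ j : Fin (2 * k + 1), (if (j : ℕ) < t k then (1:ℝ) else -1) * v j ^ 2 := by
  have htm := tm k
  have pair : ∀ i : Fin k,
      2 * ((-1 : ℝ) ^ (i : ℕ) * (((2 * k).choose (i : ℕ) : ℕ) : ℝ) *
        (Lf k v) ⟨(i : ℕ), by omega⟩ * (Lf k v) ⟨2 * k - (i : ℕ), by omega⟩) =
      g k v i - g k v (t k + i) := by
    intro i
    have hi := i.isLt
    rw [show (Lf k v) ⟨(i : ℕ), by omega⟩ =
        c k i * (v ⟨(i:ℕ), by omega⟩ + v ⟨t k + (i:ℕ), by omega⟩) by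
      rw [Lf, dif_pos hi]]
    rw [show (Lf k v) ⟨2 * k - (i : ℕ), by omega⟩ =
        (-1 : ℝ) ^ (2 * k - (2 * k - (i:ℕ))) * c k (2 * k - (2 * k - (i:ℕ))) *
          (v ⟨2 * k - (2 * k - (i:ℕ)), by omega⟩ -
           v ⟨t k + (2 * k - (2 * k - (i:ℕ))), by omega⟩) by
      rw [Lf, dif_neg (by simp; omega), dif_neg (by simp; omega)]]
    have e1 : 2 * k - (2 * k - (i:ℕ)) = (i:ℕ) := by omega
    simp only [e1]
    rw [g_spec k v i (by omega), g_spec k v (t k + i) (by omega)]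
    have e3 := c_sq k i (by omega)
    rcases Nat.even_or_odd (i:ℕ) with hp | hp <;> simp only [hp.neg_one_pow] <;>
      linear_combination (v ⟨(i:ℕ), by omega⟩ ^ 2 - v ⟨t k + (i:ℕ), by omega⟩ ^ 2) * e3
  have mid : (((2 * k).choose k : ℕ) : ℝ) * (-1 : ℝ) ^ k * (Lf k v) ⟨k, by omega⟩ ^ 2 =
      (-1 : ℝ) ^ k * g k v (m k) := by
    rw [show (Lf k v) ⟨k, by omega⟩ = d k * v ⟨m k, by omega⟩ by
      rw [Lf, dif_neg (by simp), dif_pos rfl]]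
    rw [g_spec k v (m k) (by omega)]
    linear_combination ((-1:ℝ)^k * v ⟨m k, by omega⟩ ^ 2) * (d_sq k)
  rw [I0, Finset.mul_sum]
  rw [Finset.sum_congr rfl (fun i _ => pair i), mid]
  rw [show (∑ i : Fin k, (g k v i - g k v (t k + i))) =
      ∑ n ∈ Finset.range k, (g k v n - g k v (t k + n)) from
    Fin.sum_univ_eq_sum_range (fun n => g k v n - g k v (t k + n)) k]
  rw [show (∑ j : Fin (2*k+1), (if (j : ℕ) < t k then (1:ℝ) else -1) * v j ^ 2) =
      ∑ n ∈ Finset.range (2*k+1), (if n < t k then (1:ℝ) else -1) * g k v n by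
    rw [← Fin.sum_univ_eq_sum_range (fun n => (if n < t k then (1:ℝ) else -1) * g k v n) (2*k+1)]
    exact Finset.sum_congr rfl (fun j _ => by
      rw [g_spec k v j j.isLt, Fin.eta])]
  rcases htm with ⟨ht, hm⟩ | ⟨ht, hm⟩
  · -- even case : t = k+1, m = k
    have hk : Even k := by
      by_contra ho
      simp only [t, if_neg ho] at ht
      omega
    rw [ht, hm, hk.neg_one_pow]
    rw [show 2*k+1 = (k+1) + k by ring, Finset.sum_range_add]
    have r1 : ∀ n ∈ Finset.range (k+1), (if n < k + 1 then (1:ℝ) else -1) * g k v n = g k v n := by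
      intro n hn
      rw [if_pos (Finset.mem_range.mp hn), one_mul]
    have r2 : ∀ n ∈ Finset.range k,
        (if (k+1) + n < k + 1 then (1:ℝ) else -1) * g k v ((k+1) + n) = -g k v ((k+1)+n) := by
      intro n hn
      rw [if_neg (by omega)]
      ring
    rw [Finset.sum_congr rfl r1, Finset.sum_congr rfl r2, Finset.sum_range_succ]
    rw [Finset.sum_sub_distrib]
    simp [Finset.sum_neg_distrib]
    ring
  · -- odd case : t = k, m = 2k
    have hk : ¬ Even k := by
      intro he
      simp only [t, if_pos he] at ht
      omega
    have hodd : Odd k := Nat.not_even_iff_odd.mp hk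
    rw [ht, hm, hodd.neg_one_pow]
    rw [show 2*k+1 = k + (k+1) by ring, Finset.sum_range_add]
    have r1 : ∀ n ∈ Finset.range k, (if n < k then (1:ℝ) else -1) * g k v n = g k v n := by
      intro n hn
      rw [if_pos (Finset.mem_range.mp hn), one_mul]
    have r2 : ∀ n ∈ Finset.range (k+1),
        (if k + n < k then (1:ℝ) else -1) * g k v (k + n) = -g k v (k+n) := by
      intro n hn
      rw [if_neg (by omega)]
      ring
    rw [Finset.sum_congr rfl r1, Finset.sum_congr rfl r2]
    rw [Finset.sum_range_succ]
    rw [Finset.sum_sub_distrib]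
    simp [Finset.sum_neg_distrib]
    rw [show k + k = 2 * k by ring]
    ring

end I0Proof

end


/-- I₀ is nondegenerate of signature (k+1,k) or (k,k+1): in a suitable basis it is a
sum of ±squares, with either k+1 plus signs and k minus signs or vice versa. -/
theorem stmt_5 (k : ℕ) :
    ∃ (L : (Fin (2 * k + 1) → ℝ) ≃ₗ[ℝ] (Fin (2 * k + 1) → ℝ))
      (ε : Fin (2 * k + 1) → ℝ) (S : Finset (Fin (2 * k + 1))),
      (∀ i ∈ S, ε i = 1) ∧ (∀ i ∉ S, ε i = -1) ∧
      (S.card = k + 1 ∨ S.card = k) ∧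
      ∀ v, I0 k (L v) = ∑ i, ε i * v i ^ 2 := by
  classical
  refine ⟨I0Proof.Leq k, fun j => if (j : ℕ) < I0Proof.t k then 1 else -1,
    Finset.univ.filter (fun j : Fin (2 * k + 1) => (j : ℕ) < I0Proof.t k), ?_, ?_, ?_, ?_⟩
  · intro i hi
    rw [Finset.mem_filter] at hi
    show (if (i : ℕ) < I0Proof.t k then (1:ℝ) else -1) = 1
    rw [if_pos hi.2]
  · intro i hi
    rw [Finset.mem_filter] at hi
    show (if (i : ℕ) < I0Proof.t k then (1:ℝ) else -1) = -1
    rw [if_neg (fun hc => hi ⟨Finset.mem_univ _, hc⟩)]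
  · have hle : I0Proof.t k ≤ 2 * k + 1 := by have := I0Proof.tm k; omega
    have hS : (Finset.univ.filter (fun j : Fin (2 * k + 1) => (j : ℕ) < I0Proof.t k)) =
        Finset.map (Fin.castLEEmb hle) Finset.univ := by
      ext j
      simp only [Finset.mem_filter, Finset.mem_univ, true_and, Finset.mem_map]
      constructor
      · intro hj
        exact ⟨⟨(j : ℕ), hj⟩, Fin.ext rfl⟩
      · rintro ⟨a, -, rfl⟩
        exact a.isLt
    rw [hS, Finset.card_map, Finset.card_univ, Fintype.card_fin]
    have := I0Proof.tm k
    omega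
  · intro v
    exact I0Proof.key k v
end

section
/- The curve x(λ) = (p₁ + p₂λ²)/(λ²+1), y(λ) = p₃^{3/2}(p₁−p₂)³ λ³/(λ²+1)³ − Q(x(λ)) is a parametrization of the sextic (y+Q(x))² + P(x)³ = 0, i.e. for all λ, (y(λ)+Q(x(λ)))² + P(x(λ))³ = 0, where P(x) = p₃(x−p₂)(x−p₁). -/
/-! With `w = √p₃ (p₁ - p₂) λ / (λ² + 1)` one has `x - p₂ = (p₁ - p₂) / (λ² + 1)` and
`x - p₁ = -(p₁ - p₂) λ² / (λ² + 1)`, so `P(x) = -w²`, while `y + Q(x) = w³`.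
So the point `(Y, X) = (y + Q(x), P(x)) = (w³, -w²)` lies on the cusp `Y² + X³ = 0`. -/

theorem quadratic_eval_param_eq_neg_sq {K : Type*} [Field K] {p₁ p₂ p₃ s t : K}
    (hs : s ^ 2 = p₃) (ht : t ^ 2 + 1 ≠ 0) :
    p₃ * ((p₁ + p₂ * t ^ 2) / (t ^ 2 + 1) - p₂) * ((p₁ + p₂ * t ^ 2) / (t ^ 2 + 1) - p₁) =
      -(s * (p₁ - p₂) * t / (t ^ 2 + 1)) ^ 2 := by
  subst hs
  field_simp
  ring

/-- The rational parametrization of the cuspidal sextic (y+Q(x))² + P(x)³ = 0. -/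
theorem stmt_11 (p1 p2 p3 q0 q1 q2 q3 l : ℝ) (hp3 : 0 < p3) :
    ((Real.sqrt p3 ^ 3 * (p1 - p2) ^ 3 * l ^ 3 / (l ^ 2 + 1) ^ 3 -
        (q0 + q1 * ((p1 + p2 * l ^ 2) / (l ^ 2 + 1)) +
          q2 * ((p1 + p2 * l ^ 2) / (l ^ 2 + 1)) ^ 2 +
          q3 * ((p1 + p2 * l ^ 2) / (l ^ 2 + 1)) ^ 3)) +
      (q0 + q1 * ((p1 + p2 * l ^ 2) / (l ^ 2 + 1)) +
        q2 * ((p1 + p2 * l ^ 2) / (l ^ 2 + 1)) ^ 2 +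
        q3 * ((p1 + p2 * l ^ 2) / (l ^ 2 + 1)) ^ 3)) ^ 2 +
      (p3 * ((p1 + p2 * l ^ 2) / (l ^ 2 + 1) - p2) *
        ((p1 + p2 * l ^ 2) / (l ^ 2 + 1) - p1)) ^ 3 = 0 := by
  have hy : Real.sqrt p3 ^ 3 * (p1 - p2) ^ 3 * l ^ 3 / (l ^ 2 + 1) ^ 3 =
      (Real.sqrt p3 * (p1 - p2) * l / (l ^ 2 + 1)) ^ 3 := by
    rw [div_pow, mul_pow, mul_pow]
  rw [sub_add_cancel, hy,
    quadratic_eval_param_eq_neg_sq (Real.sq_sqrt hp3.le) (by positivity : l ^ 2 + 1 ≠ 0)]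
  ring
end

section
/- For F = (21/5)·ut/s − (84/25)·t³/s² (where s = y⁽⁴⁾, t = y⁽⁵⁾, u = y⁽⁶⁾), the first Wünschmann expression W₁[F] = 245𝒟²F₆ − 245𝒟F₅ + 98F₄ − 210(𝒟F₆)F₆ + 70F₅F₆ + 20F₆³ vanishes identically on the domain s ≠ 0. -/
/-! In the coordinates `s, t, u = z 5, z 6, z 7`, the functions
`(a·ut + c·t + d·u)/s + (b·t³ + e·t²)/s²` have explicit partial derivatives on `s ≠ 0`, and for
`F = a·ut/s + b·t³/s²` the quantities `F₅`, `F₆`, `𝒟F₆` stay in this five-parameter family. Hence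
`W₁[F]` can be computed symbolically:
`W₁[F] = (-588a - 1470b - 140a²)·ut/s² + (490a + 1274b + 210a² + 210ab + 20a³)·t³/s³`,
and both coefficients vanish at `a = 21/5`, `b = -84/25`. -/

/-- Partial derivative of G : ℝ⁸ → ℝ in the i-th coordinate. Coordinates:
z 0 = x, z (k+1) = y⁽ᵏ⁾ for k = 0,…,6. -/
noncomputable def pd (i : Fin 8) (G : (Fin 8 → ℝ) → ℝ) : (Fin 8 → ℝ) → ℝ :=
  fun z => fderiv ℝ G z (Pi.single i 1)

/-- The total derivative 𝒟 = ∂ₓ + Σ_{k=1}^{6} y⁽ᵏ⁾ ∂/∂y⁽ᵏ⁻¹⁾ + F ∂/∂y⁽⁶⁾ along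
solutions of y⁽⁷⁾ = F. -/
noncomputable def Dt (F G : (Fin 8 → ℝ) → ℝ) : (Fin 8 → ℝ) → ℝ := fun z =>
  pd 0 G z + z 2 * pd 1 G z + z 3 * pd 2 G z + z 4 * pd 3 G z + z 5 * pd 4 G z +
    z 6 * pd 5 G z + z 7 * pd 6 G z + F z * pd 7 G z

/-- Fₖ = ∂F/∂y⁽ᵏ⁾. -/
noncomputable def Fp (k : ℕ) (F : (Fin 8 → ℝ) → ℝ) : (Fin 8 → ℝ) → ℝ :=
  pd (Fin.ofNat 8 (k + 1 : ℕ)) F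

/-- The first Wünschmann condition W₁ of a 7th order ODE y⁽⁷⁾ = F. -/
noncomputable def W1 (F : (Fin 8 → ℝ) → ℝ) : (Fin 8 → ℝ) → ℝ := fun z =>
  245 * Dt F (Dt F (Fp 6 F)) z - 245 * Dt F (Fp 5 F) z + 98 * Fp 4 F z -
    210 * Dt F (Fp 6 F) z * Fp 6 F z + 70 * Fp 5 F z * Fp 6 F z + 20 * (Fp 6 F z) ^ 3

open Filter Topology

theorem eventually_ne_zero_five {z : Fin 8 → ℝ} (hz : z 5 ≠ 0) : ∀ᶠ w in 𝓝 z, w 5 ≠ 0 :=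
  (continuous_apply 5).continuousAt.eventually_ne hz

theorem Dt_congr_of_eventuallyEq {F G H : (Fin 8 → ℝ) → ℝ} {z : Fin 8 → ℝ}
    (h : G =ᶠ[𝓝 z] H) : Dt F G z = Dt F H z := by
  simp only [Dt, pd, h.fderiv_eq]

noncomputable def stuRat (a b c d e : ℝ) : (Fin 8 → ℝ) → ℝ := fun z =>
  (a * z 7 * z 6 + c * z 6 + d * z 7) / z 5 + (b * z 6 ^ 3 + e * z 6 ^ 2) / z 5 ^ 2

section

variable {a b c d e : ℝ} {z : Fin 8 → ℝ}

theorem fderiv_stuRat_apply (hz : z 5 ≠ 0) (v : Fin 8 → ℝ) :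
    fderiv ℝ (stuRat a b c d e) z v =
      (-(a * z 7 * z 6 + c * z 6 + d * z 7) / z 5 ^ 2 - 2 * (b * z 6 ^ 3 + e * z 6 ^ 2) / z 5 ^ 3) * v 5
        + ((a * z 7 + c) / z 5 + (3 * b * z 6 ^ 2 + 2 * e * z 6) / z 5 ^ 2) * v 6
        + ((a * z 6 + d) / z 5) * v 7 := by
  have hs : HasFDerivAt (fun w : Fin 8 → ℝ => w 5) (ContinuousLinearMap.proj (R := ℝ) 5) z :=
    hasFDerivAt_apply 5 z
  have ht : HasFDerivAt (fun w : Fin 8 → ℝ => w 6) (ContinuousLinearMap.proj (R := ℝ) 6) z :=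
    hasFDerivAt_apply 6 z
  have hu : HasFDerivAt (fun w : Fin 8 → ℝ => w 7) (ContinuousLinearMap.proj (R := ℝ) 7) z :=
    hasFDerivAt_apply 7 z
  have hinv : HasFDerivAt (fun w : Fin 8 → ℝ => (w 5)⁻¹) _ z :=
    (hasDerivAt_inv hz).comp_hasFDerivAt z hs
  have hinv2 : HasFDerivAt (fun w : Fin 8 → ℝ => (w 5 ^ 2)⁻¹) _ z :=
    (hasDerivAt_inv (pow_ne_zero 2 hz)).comp_hasFDerivAt z (hs.pow 2)
  have hf : HasFDerivAt (stuRat a b c d e) _ z :=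
    (((((hu.const_mul a).mul ht).add (ht.const_mul c)).add (hu.const_mul d)).mul hinv).add
      ((((ht.pow 3).const_mul b).add ((ht.pow 2).const_mul e)).mul hinv2)
  rw [hf.fderiv]
  simp only [Pi.add_apply, Pi.mul_apply, add_apply, smul_apply, ContinuousLinearMap.proj_apply,
    nsmul_eq_mul, smul_eq_mul]
  field_simp
  ring

theorem Dt_stuRat (F : (Fin 8 → ℝ) → ℝ) (hz : z 5 ≠ 0) :
    Dt F (stuRat a b c d e) z =
      z 6 * (-(a * z 7 * z 6 + c * z 6 + d * z 7) / z 5 ^ 2 - 2 * (b * z 6 ^ 3 + e * z 6 ^ 2) / z 5 ^ 3)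
        + z 7 * ((a * z 7 + c) / z 5 + (3 * b * z 6 ^ 2 + 2 * e * z 6) / z 5 ^ 2)
        + F z * ((a * z 6 + d) / z 5) := by
  simp [Dt, pd, fderiv_stuRat_apply hz]

theorem Fp_four_stuRat (hz : z 5 ≠ 0) :
    Fp 4 (stuRat a b 0 0 0) z = -(a * z 7 * z 6) / z 5 ^ 2 - 2 * b * z 6 ^ 3 / z 5 ^ 3 := by
  simp only [Fp, pd, Nat.reduceAdd, Fin.ofNat_eq_cast, Nat.cast_ofNat, fderiv_stuRat_apply hz,
    Pi.single_eq_same, ne_eq, Fin.reduceEq, not_false_eq_true, Pi.single_eq_of_ne]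
  ring

theorem Fp_five_stuRat (hz : z 5 ≠ 0) :
    Fp 5 (stuRat a b 0 0 0) z = stuRat 0 0 0 a (3 * b) z := by
  simp [Fp, pd, fderiv_stuRat_apply hz, stuRat]

theorem Fp_six_stuRat (hz : z 5 ≠ 0) :
    Fp 6 (stuRat a b 0 0 0) z = stuRat 0 0 a 0 0 z := by
  simp [Fp, pd, fderiv_stuRat_apply hz, stuRat]

end

/- `Fp 6 F` agrees with `stuRat 0 0 a 0 0` only where `s ≠ 0`, so `𝒟` of it is computed through
the germ at `z`. -/
theorem Dt_Fp_six_stuRat (F : (Fin 8 → ℝ) → ℝ) {a b : ℝ} {z : Fin 8 → ℝ} (hz : z 5 ≠ 0) :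
    Dt F (Fp 6 (stuRat a b 0 0 0)) z = stuRat 0 0 0 a (-a) z := by
  rw [Dt_congr_of_eventuallyEq ((eventually_ne_zero_five hz).mono fun w hw => Fp_six_stuRat hw),
    Dt_stuRat F hz, stuRat]
  field_simp
  ring

theorem W1_stuRat {a b : ℝ} {z : Fin 8 → ℝ} (hz : z 5 ≠ 0) :
    W1 (stuRat a b 0 0 0) z =
      (-588 * a - 1470 * b - 140 * a ^ 2) * z 7 * z 6 / z 5 ^ 2
        + (490 * a + 1274 * b + 210 * a ^ 2 + 210 * a * b + 20 * a ^ 3) * z 6 ^ 3 / z 5 ^ 3 := by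
  have hs := eventually_ne_zero_five hz
  have hFp5 : Fp 5 (stuRat a b 0 0 0) =ᶠ[𝓝 z] stuRat 0 0 0 a (3 * b) :=
    hs.mono fun w hw => Fp_five_stuRat hw
  have hDFp6 : Dt (stuRat a b 0 0 0) (Fp 6 (stuRat a b 0 0 0)) =ᶠ[𝓝 z] stuRat 0 0 0 a (-a) :=
    hs.mono fun w hw => Dt_Fp_six_stuRat _ hw
  rw [W1, Dt_congr_of_eventuallyEq hDFp6, Dt_congr_of_eventuallyEq hFp5, Dt_Fp_six_stuRat _ hz,
    Fp_four_stuRat hz, Fp_five_stuRat hz, Fp_six_stuRat hz, Dt_stuRat _ hz, Dt_stuRat _ hz]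
  simp only [stuRat]
  field_simp
  ring

/-- For F = (21/5)ut/s − (84/25)t³/s² (s = y⁽⁴⁾, t = y⁽⁵⁾, u = y⁽⁶⁾), the first
Wünschmann expression W₁[F] vanishes identically on the domain s ≠ 0. -/
theorem stmt_14 :
    ∀ z : Fin 8 → ℝ, z 5 ≠ 0 →
      W1 (fun z => 21 / 5 * (z 7 * z 6 / z 5) - 84 / 25 * (z 6) ^ 3 / (z 5) ^ 2) z = 0 := by
  intro z hz
  have hF : (fun z : Fin 8 → ℝ => 21 / 5 * (z 7 * z 6 / z 5) - 84 / 25 * (z 6) ^ 3 / (z 5) ^ 2) =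
      stuRat (21 / 5) (-84 / 25) 0 0 0 :=
    funext fun w => by simp only [stuRat]; ring
  rw [hF, W1_stuRat hz]
  norm_num
end

section
/- In the sextic coframe, the forms φ = 3(θ²∧θ³∧θ⁷ + θ¹∧θ⁵∧θ⁶) + θ⁴∧(θ¹∧θ⁷ + 6θ²∧θ⁶ − 15θ³∧θ⁵) and *φ = −20θ¹∧θ⁴∧θ⁵∧θ⁶ + 5θ¹∧θ³∧θ⁵∧θ⁷ − 20θ²∧θ³∧θ⁴∧θ⁷ − 2θ¹∧θ²∧θ⁶∧θ⁷ + 30θ²∧θ³∧θ⁵∧θ⁶ satisfy φ ∧ *φ = c·θ¹∧θ²∧θ³∧θ⁴∧θ⁵∧θ⁶∧θ⁷ for some nonzero constant c. -/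
open ExteriorAlgebra

/-!
Only the relations `θⁱ ∧ θⁱ = 0` and `θⁱ ∧ θʲ = -θʲ ∧ θⁱ` enter: expanding `φ ∧ *φ` and sorting each
monomial into increasing order leaves five nonzero products, each `± θ¹ ∧ ⋯ ∧ θ⁷`, adding up to
`-210 θ¹ ∧ ⋯ ∧ θ⁷`. So the identity holds for any seven anticommuting square-zero elements of an
algebra, in particular for the images of any seven covectors in the exterior algebra.
-/

section AnticommutingSeptuple

variable {R A : Type*} [CommRing R] [Ring A] [Algebra R A]

/-- `θᵏ` of the paper is `x (k - 1)`. -/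
def sexticPhi (x : Fin 7 → A) : A :=
  (3 : R) • (x 1 * x 2 * x 6 + x 0 * x 4 * x 5) +
    x 3 * (x 0 * x 6 + (6 : R) • (x 1 * x 5) - (15 : R) • (x 2 * x 4))

def sexticStarPhi (x : Fin 7 → A) : A :=
  (-20 : R) • (x 0 * x 3 * x 4 * x 5) + (5 : R) • (x 0 * x 2 * x 4 * x 6) -
    (20 : R) • (x 1 * x 2 * x 3 * x 6) - (2 : R) • (x 0 * x 1 * x 5 * x 6) +
    (30 : R) • (x 1 * x 2 * x 4 * x 5)

theorem sexticPhi_mul_sexticStarPhi (x : Fin 7 → A) (hsq : ∀ i, x i * x i = 0)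
    (hanti : ∀ i j, x i * x j = -(x j * x i)) :
    sexticPhi (R := R) x * sexticStarPhi (R := R) x =
      (-210 : R) • (x 0 * x 1 * x 2 * x 3 * x 4 * x 5 * x 6) := by
  have hsq_left : ∀ i (y : A), x i * (x i * y) = 0 := fun i y => by
    rw [← mul_assoc, hsq, zero_mul]
  have hswap : ∀ i j, j < i → x i * x j = -(x j * x i) := fun i j _ => hanti i j
  have hswap_left : ∀ i j (y : A), j < i → x i * (x j * y) = -(x j * (x i * y)) :=
    fun i j y _ => by rw [← mul_assoc, hanti i j, neg_mul, mul_assoc]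
  -- Swapping only out-of-order neighbours makes this `simp` set terminate in sorted monomials.
  simp only [sexticPhi, sexticStarPhi, sub_eq_add_neg, neg_smul, smul_add, smul_neg, mul_add,
    add_mul, mul_neg, neg_mul, smul_mul_assoc, mul_smul_comm, mul_assoc, neg_neg, hsq, hsq_left,
    hswap, hswap_left, mul_zero, smul_zero, neg_zero, add_zero, zero_add, smul_smul,
    Fin.reduceLT]
  module

end AnticommutingSeptuple

theorem stmt_18_general (θ : Fin 7 → (Fin 7 → ℝ)) :
    ∃ c : ℝ, c ≠ 0 ∧
      ((3 : ℝ) • (ι ℝ (θ 1) * ι ℝ (θ 2) * ι ℝ (θ 6) + ι ℝ (θ 0) * ι ℝ (θ 4) * ι ℝ (θ 5)) +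
        ι ℝ (θ 3) * (ι ℝ (θ 0) * ι ℝ (θ 6) + (6 : ℝ) • (ι ℝ (θ 1) * ι ℝ (θ 5)) -
          (15 : ℝ) • (ι ℝ (θ 2) * ι ℝ (θ 4)))) *
      ((-20 : ℝ) • (ι ℝ (θ 0) * ι ℝ (θ 3) * ι ℝ (θ 4) * ι ℝ (θ 5)) +
        (5 : ℝ) • (ι ℝ (θ 0) * ι ℝ (θ 2) * ι ℝ (θ 4) * ι ℝ (θ 6)) -
        (20 : ℝ) • (ι ℝ (θ 1) * ι ℝ (θ 2) * ι ℝ (θ 3) * ι ℝ (θ 6)) -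
        (2 : ℝ) • (ι ℝ (θ 0) * ι ℝ (θ 1) * ι ℝ (θ 5) * ι ℝ (θ 6)) +
        (30 : ℝ) • (ι ℝ (θ 1) * ι ℝ (θ 2) * ι ℝ (θ 4) * ι ℝ (θ 5))) =
      c • (ι ℝ (θ 0) * ι ℝ (θ 1) * ι ℝ (θ 2) * ι ℝ (θ 3) * ι ℝ (θ 4) * ι ℝ (θ 5) *
        ι ℝ (θ 6)) :=
  ⟨-210, by norm_num,
    sexticPhi_mul_sexticStarPhi (fun i => ι ℝ (θ i)) (fun i => ι_sq_zero _)
      (fun i j => eq_neg_of_add_eq_zero_left (ι_add_mul_swap _ _))⟩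

/-- In the sextic coframe θ¹,...,θ⁷, the forms
φ = 3(θ²∧θ³∧θ⁷ + θ¹∧θ⁵∧θ⁶) + θ⁴∧(θ¹∧θ⁷ + 6θ²∧θ⁶ − 15θ³∧θ⁵) and
*φ = −20θ¹∧θ⁴∧θ⁵∧θ⁶ + 5θ¹∧θ³∧θ⁵∧θ⁷ − 20θ²∧θ³∧θ⁴∧θ⁷ − 2θ¹∧θ²∧θ⁶∧θ⁷ + 30θ²∧θ³∧θ⁵∧θ⁶
satisfy φ ∧ *φ = c θ¹∧⋯∧θ⁷ for a nonzero constant c. -/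
theorem stmt_18 (θ : Fin 7 → (Fin 7 → ℝ)) (hθ : LinearIndependent ℝ θ) :
    ∃ c : ℝ, c ≠ 0 ∧
      ((3 : ℝ) • (ι ℝ (θ 1) * ι ℝ (θ 2) * ι ℝ (θ 6) + ι ℝ (θ 0) * ι ℝ (θ 4) * ι ℝ (θ 5)) +
        ι ℝ (θ 3) * (ι ℝ (θ 0) * ι ℝ (θ 6) + (6 : ℝ) • (ι ℝ (θ 1) * ι ℝ (θ 5)) -
          (15 : ℝ) • (ι ℝ (θ 2) * ι ℝ (θ 4)))) *
      ((-20 : ℝ) • (ι ℝ (θ 0) * ι ℝ (θ 3) * ι ℝ (θ 4) * ι ℝ (θ 5)) +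
        (5 : ℝ) • (ι ℝ (θ 0) * ι ℝ (θ 2) * ι ℝ (θ 4) * ι ℝ (θ 6)) -
        (20 : ℝ) • (ι ℝ (θ 1) * ι ℝ (θ 2) * ι ℝ (θ 3) * ι ℝ (θ 6)) -
        (2 : ℝ) • (ι ℝ (θ 0) * ι ℝ (θ 1) * ι ℝ (θ 5) * ι ℝ (θ 6)) +
        (30 : ℝ) • (ι ℝ (θ 1) * ι ℝ (θ 2) * ι ℝ (θ 4) * ι ℝ (θ 5))) =
      c • (ι ℝ (θ 0) * ι ℝ (θ 1) * ι ℝ (θ 2) * ι ℝ (θ 3) * ι ℝ (θ 4) * ι ℝ (θ 5) *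
        ι ℝ (θ 6)) :=
  stmt_18_general θ
end
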